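/- arXiv:1205.5911 — 4 statements merged into one kernel-verified Lean document; each statement's English description precedes it below -/
import Mathlib

section
/- Correctness of the 2D algorithm's stopping condition: let p ∈ L and q ∈ R with all points of R lying weakly above the line through p and q (no clockwise turn from (p,q) to any r ∈ R) and all points of L lying weakly above the same line. Then the segment (p,q) lies on the lower convex hull of L ∪ R, i.e., the line through p and q supports L ∪ R from below, and it intersects the y-axis. -/
/-! The cross product `(q - p) × (r - p)` equals `(q.1 - p.1)` times the height of `r` above the
line through `p` and `q`, so for `p.1 < q.1` its sign says on which side of the line `r` lies.
The segment meets the `y`-axis because `p.1 < 0 < q.1`. -/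

lemma sub_lineThrough_eq_cross_div {p q : ℝ × ℝ} (hpq : p.1 < q.1) (r : ℝ × ℝ) :
    r.2 - (p.2 + (q.2 - p.2) / (q.1 - p.1) * (r.1 - p.1)) =
      ((q.1 - p.1) * (r.2 - p.2) - (q.2 - p.2) * (r.1 - p.1)) / (q.1 - p.1) := by
  have : q.1 - p.1 ≠ 0 := (sub_pos.mpr hpq).ne'
  field_simp
  ring

lemma lineThrough_le_iff_cross_nonneg {p q : ℝ × ℝ} (hpq : p.1 < q.1) (r : ℝ × ℝ) :
    p.2 + (q.2 - p.2) / (q.1 - p.1) * (r.1 - p.1) ≤ r.2 ↔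
      0 ≤ (q.1 - p.1) * (r.2 - p.2) - (q.2 - p.2) * (r.1 - p.1) := by
  rw [← sub_nonneg, sub_lineThrough_eq_cross_div hpq, le_div_iff₀ (sub_pos.mpr hpq), zero_mul]

lemma exists_mem_Icc_add_mul_sub_eq_zero {a b : ℝ} (ha : a ≤ 0) (hb : 0 ≤ b) :
    ∃ t ∈ Set.Icc (0 : ℝ) 1, a + t * (b - a) = 0 := by
  have hmem : (0 : ℝ) ∈ segment ℝ a b := (segment_eq_Icc (ha.trans hb)).symm ▸ ⟨ha, hb⟩
  rw [segment_eq_image'] at hmem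
  exact hmem

theorem stopping_condition_correct_general
    (L R : Finset (ℝ × ℝ))
    (hL : ∀ x ∈ L, x.1 < 0) (hR : ∀ x ∈ R, 0 < x.1)
    (p : ℝ × ℝ) (hp : p ∈ L) (q : ℝ × ℝ) (hq : q ∈ R)
    (hRabove : ∀ r ∈ R, 0 ≤ (q.1 - p.1) * (r.2 - p.2) - (q.2 - p.2) * (r.1 - p.1))
    (hLabove : ∀ r ∈ L, 0 ≤ (q.1 - p.1) * (r.2 - p.2) - (q.2 - p.2) * (r.1 - p.1)) :
    (∀ r ∈ L ∪ R, p.2 + (q.2 - p.2) / (q.1 - p.1) * (r.1 - p.1) ≤ r.2) ∧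
    (∃ t ∈ Set.Icc (0 : ℝ) 1, p.1 + t * (q.1 - p.1) = 0) := by
  have hpq : p.1 < q.1 := (hL p hp).trans (hR q hq)
  refine ⟨fun r hr => ?_, exists_mem_Icc_add_mul_sub_eq_zero (hL p hp).le (hR q hq).le⟩
  rw [lineThrough_le_iff_cross_nonneg hpq]
  rcases Finset.mem_union.mp hr with hrL | hrR
  exacts [hLabove r hrL, hRabove r hrR]

/-- Correctness of the stopping condition of the 2D algorithm: let `L` be a
finite nonempty set of points with negative `x`-coordinate and `R` a finite
nonempty set with positive `x`-coordinate, `p ∈ L`, `q ∈ R`.  If no point of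
`R` makes a clockwise turn from `(p, q)` and no point of `L` is below the line
through `p` and `q` (expressed via the cross product), then the line through
`p` and `q` supports `L ∪ R` from below, and the segment `(p, q)` intersects
the `y`-axis. -/
theorem stopping_condition_correct
    (L R : Finset (ℝ × ℝ)) (hLne : L.Nonempty) (hRne : R.Nonempty)
    (hL : ∀ x ∈ L, x.1 < 0) (hR : ∀ x ∈ R, 0 < x.1)
    (p : ℝ × ℝ) (hp : p ∈ L) (q : ℝ × ℝ) (hq : q ∈ R)
    (hRabove : ∀ r ∈ R, 0 ≤ (q.1 - p.1) * (r.2 - p.2) - (q.2 - p.2) * (r.1 - p.1))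
    (hLabove : ∀ r ∈ L, 0 ≤ (q.1 - p.1) * (r.2 - p.2) - (q.2 - p.2) * (r.1 - p.1)) :
    (∀ r ∈ L ∪ R, p.2 + (q.2 - p.2) / (q.1 - p.1) * (r.1 - p.1) ≤ r.2) ∧
    (∃ t ∈ Set.Icc (0 : ℝ) 1, p.1 + t * (q.1 - p.1) = 0) :=
  stopping_condition_correct_general L R hL hR p hp q hq hRabove hLabove
end

section
/- In 2D, if p ∈ L and q ∈ R determine a line y = mx + k supporting DP = L ∪ R from below, then the dual point (m, −k) is the optimal solution of the min-max problem: x* = m achieves min_x max_i (aᵢx + bᵢ), with optimal value −k, where DP = {(aᵢ, −bᵢ)}. -/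
/-- If the line `y = m x + k` passes through a dual point with negative
`x`-coordinate and one with positive `x`-coordinate, and supports the set of
dual points `DP = {(aᵢ, -bᵢ)}` from below, then `x* = m` is an optimal solution
of `min_x max_i (aᵢ x + bᵢ)` with optimal value `-k`: every `x` has some
constraint value `≥ -k`, while at `x = m` all constraint values are `≤ -k`
with equality attained. -/
theorem dual_supporting_line_gives_minmax_optimum
    (n : ℕ) (a b : Fin n → ℝ) (m k : ℝ)
    (i₀ j₀ : Fin n) (hi₀ : a i₀ < 0) (hj₀ : 0 < a j₀)
    (hpi : -b i₀ = m * a i₀ + k) (hpj : -b j₀ = m * a j₀ + k)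
    (hsupp : ∀ i, m * a i + k ≤ -b i) :
    (∀ x : ℝ, ∃ i, -k ≤ a i * x + b i) ∧
    (∀ i, a i * m + b i ≤ -k) ∧
    (∃ i, a i * m + b i = -k) := by
  refine ⟨?_, ?_, ⟨i₀, by nlinarith [hpi]⟩⟩
  · intro x
    rcases le_total x m with hx | hx
    · exact ⟨i₀, by nlinarith [mul_nonneg (le_of_lt (neg_pos.mpr hi₀)) (sub_nonneg.mpr hx)]⟩
    · exact ⟨j₀, by nlinarith [mul_nonneg (le_of_lt hj₀) (sub_nonneg.mpr hx)]⟩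
  · intro i
    have := hsupp i
    linarith
end

section
/- Under the assumptions of the 'behind' proposition: if n·(q−p) ≥ 0 for all q ∈ DP, n_z > 0, and p is behind the minimal-z point p_min, then the plane z = (−n_x/n_z)x + (−n_y/n_z)y + c through p has at least one of its two linear coefficients strictly negative; hence its dual point (−n_x/n_z, −n_y/n_z, −c) has a strictly negative x- or y-coordinate, and thus cannot solve the min-max problem constrained to (x,y) ∈ [0,1]². -/
/-- Behind proposition, dual-point form: under the hypotheses of the behind
proposition, the supporting plane `z = (-n_x/n_z) x + (-n_y/n_z) y + c` through
`p` has at least one strictly negative linear coefficient, hence its dual point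
`(-n_x/n_z, -n_y/n_z, -c)` has a strictly negative `x`- or `y`-coordinate and
cannot solve the min-max problem constrained to `(x,y) ∈ [0,1]²`. -/
theorem behind_point_plane_coefficient_negative
    (DP : Finset (ℝ × ℝ × ℝ)) (pmin p : ℝ × ℝ × ℝ)
    (hpmin : pmin ∈ DP) (hminz : ∀ q ∈ DP, pmin.2.2 ≤ q.2.2)
    (hp : p ∈ DP)
    (hbehind : p.1 < pmin.1 ∧ p.2.1 < pmin.2.1 ∧ pmin.2.2 < p.2.2)
    (n : ℝ × ℝ × ℝ)
    (hsupp : ∀ q ∈ DP,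
      0 ≤ n.1 * (q.1 - p.1) + n.2.1 * (q.2.1 - p.2.1) + n.2.2 * (q.2.2 - p.2.2))
    (hnz : 0 < n.2.2) :
    (-n.1 / n.2.2 < 0 ∨ -n.2.1 / n.2.2 < 0) ∧
    ¬ (-n.1 / n.2.2 ∈ Set.Icc (0 : ℝ) 1 ∧ -n.2.1 / n.2.2 ∈ Set.Icc (0 : ℝ) 1) := by
  have h := hsupp pmin hpmin
  obtain ⟨hx, hy, hz⟩ := hbehind
  have h3 : n.2.2 * (pmin.2.2 - p.2.2) < 0 :=
    mul_neg_of_pos_of_neg hnz (by linarith)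
  have hsum : 0 < n.1 * (pmin.1 - p.1) + n.2.1 * (pmin.2.1 - p.2.1) := by linarith
  have hcase : 0 < n.1 ∨ 0 < n.2.1 := by
    by_contra hc
    push_neg at hc
    obtain ⟨h1, h2⟩ := hc
    nlinarith
  have hkey : -n.1 / n.2.2 < 0 ∨ -n.2.1 / n.2.2 < 0 := by
    rcases hcase with h1 | h2
    · left; exact div_neg_of_neg_of_pos (by linarith) hnz
    · right; exact div_neg_of_neg_of_pos (by linarith) hnz
  refine ⟨hkey, ?_⟩
  rintro ⟨⟨ha, _⟩, ⟨hb, _⟩⟩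
  rcases hkey with h | h <;> linarith
end

section
/- Safe discarding (behind case): let DP ⊂ ℝ³ be finite, p_min ∈ DP of minimal z-coordinate, and p ∈ DP behind p_min. Then any plane with normal n (n_z > 0) that supports DP \ {p} from below (n·(q − p′) ≥ 0 for all q ∈ DP \ {p}, for some p′ on the plane) but does not support DP (i.e., n·(p − p′) < 0) has n_x > 0 or n_y > 0; hence its dual point has a negative coefficient and cannot solve the min-max problem constrained to [0,1]². Consequently, removing p does not introduce bogus solutions. -/
/-- Safe discarding, behind case: let `p_min ∈ DP` have minimal `z`-coordinate
and `p ∈ DP` be behind `p_min`.  Any plane with normal `n` (`n_z > 0`) through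
a point `p'` that supports `DP \ {p}` from below but has `p` strictly on its
negative side satisfies `n_x > 0` or `n_y > 0`; hence the corresponding dual
point has a strictly negative coefficient and cannot solve the min-max problem
constrained to `[0,1]²`.  Thus removing `p` introduces no bogus solutions. -/
theorem safe_discard_behind
    (DP : Finset (ℝ × ℝ × ℝ)) (pmin p : ℝ × ℝ × ℝ)
    (hpmin : pmin ∈ DP) (hminz : ∀ q ∈ DP, pmin.2.2 ≤ q.2.2)
    (hp : p ∈ DP)
    (hbehind : p.1 < pmin.1 ∧ p.2.1 < pmin.2.1 ∧ pmin.2.2 < p.2.2)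
    (n p' : ℝ × ℝ × ℝ) (hnz : 0 < n.2.2)
    (hsupp : ∀ q ∈ DP.erase p,
      0 ≤ n.1 * (q.1 - p'.1) + n.2.1 * (q.2.1 - p'.2.1) + n.2.2 * (q.2.2 - p'.2.2))
    (hsep : n.1 * (p.1 - p'.1) + n.2.1 * (p.2.1 - p'.2.1) + n.2.2 * (p.2.2 - p'.2.2) < 0) :
    (0 < n.1 ∨ 0 < n.2.1) ∧
    (-n.1 / n.2.2 < 0 ∨ -n.2.1 / n.2.2 < 0) := by
  obtain ⟨hx, hy, hz⟩ := hbehind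
  have hne : pmin ≠ p := fun h => by rw [h] at hx; linarith
  have hmin := hsupp pmin (Finset.mem_erase.mpr ⟨hne, hpmin⟩)
  have key : n.1 * (p.1 - pmin.1) + n.2.1 * (p.2.1 - pmin.2.1)
      + n.2.2 * (p.2.2 - pmin.2.2) < 0 := by nlinarith
  have hzpos : 0 < n.2.2 * (p.2.2 - pmin.2.2) := by nlinarith
  have hmain : 0 < n.1 ∨ 0 < n.2.1 := by
    by_contra h
    push_neg at h
    nlinarith [mul_nonneg (neg_nonneg.mpr h.1) (le_of_lt (sub_pos.mpr hx)),
      mul_nonneg (neg_nonneg.mpr h.2) (le_of_lt (sub_pos.mpr hy))]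
  refine ⟨hmain, ?_⟩
  rcases hmain with h | h
  · exact Or.inl (div_neg_of_neg_of_pos (by linarith) hnz)
  · exact Or.inr (div_neg_of_neg_of_pos (by linarith) hnz)
end
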